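/- Let G be a locally compact, Hausdorff, étale groupoid with dynamic asymptotic dimension at most d, and let H ⊆ G be a closed subgroupoid. Then H has dynamic asymptotic dimension at most d. -/
import Mathlib


/-- A topological groupoid structure on a topological space `G`.  The range and source
maps land in the set of units (idempotents of `src`), composition `mul g h` is defined
when `src g = rng h`, and all structure maps are continuous. -/
structure TopGroupoid (G : Type*) [TopologicalSpace G] where
  src : G → G
  rng : G → G
  mul : (g h : G) → src g = rng h → G
  inv : G → G
  src_src : ∀ g, src (src g) = src g
  rng_src : ∀ g, rng (src g) = src g
  src_rng : ∀ g, src (rng g) = rng g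
  rng_rng : ∀ g, rng (rng g) = rng g
  src_mul : ∀ g h hgh, src (mul g h hgh) = src h
  rng_mul : ∀ g h hgh, rng (mul g h hgh) = rng g
  mul_assoc : ∀ g h k (hgh : src g = rng h) (hhk : src h = rng k)
      (h₁ : src (mul g h hgh) = rng k) (h₂ : src g = rng (mul h k hhk)),
      mul (mul g h hgh) k h₁ = mul g (mul h k hhk) h₂
  rng_mul_cancel : ∀ g (h : src (rng g) = rng g), mul (rng g) g h = g
  mul_src_cancel : ∀ g (h : src g = rng (src g)), mul g (src g) h = g
  src_inv : ∀ g, src (inv g) = rng g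
  rng_inv : ∀ g, rng (inv g) = src g
  inv_inv : ∀ g, inv (inv g) = g
  inv_mul_cancel : ∀ g (h : src (inv g) = rng g), mul (inv g) g h = src g
  mul_inv_cancel : ∀ g (h : src g = rng (inv g)), mul g (inv g) h = rng g
  continuous_src : Continuous src
  continuous_rng : Continuous rng
  continuous_inv : Continuous inv
  continuous_mul : Continuous fun p : {p : G × G // src p.1 = rng p.2} =>
    mul p.1.1 p.1.2 p.2

namespace TopGroupoid

variable {G : Type*} [TopologicalSpace G] (𝒢 : TopGroupoid G)

/-- The unit space `G⁰` of the groupoid. -/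
def units : Set G := {x | 𝒢.src x = x}

/-- A groupoid is principal if `g ↦ (r g, s g)` is injective. -/
def Principal : Prop := Function.Injective fun g => (𝒢.rng g, 𝒢.src g)

/-- A subset of `G` closed under inversion and composition. -/
def IsSubgroupoid (S : Set G) : Prop :=
  (∀ g ∈ S, 𝒢.inv g ∈ S) ∧
    ∀ g ∈ S, ∀ h ∈ S, ∀ hgh : 𝒢.src g = 𝒢.rng h, 𝒢.mul g h hgh ∈ S

/-- The subgroupoid generated by a subset. -/
def gen (X : Set G) : Set G := ⋂₀ {S | X ⊆ S ∧ 𝒢.IsSubgroupoid S}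

/-- A groupoid is étale if its range map is a local homeomorphism. -/
def Etale : Prop :=
  ∀ g : G, ∃ U : Set G, IsOpen U ∧ g ∈ U ∧ Set.InjOn 𝒢.rng U ∧
    ∀ V ⊆ U, IsOpen V → IsOpen (𝒢.rng '' V)

/-- Dynamic asymptotic dimension at most `d` (Guentner–Willett–Yu): for every open
precompact `V ⊆ G` there are open sets `U₀, …, U_d` in the unit space covering
`s(V) ∪ r(V)` such that each `⟨{g ∈ V : s g, r g ∈ U i}⟩` is precompact. -/
def DadLE (d : ℕ) : Prop :=
  ∀ V : Set G, IsOpen V → IsCompact (closure V) →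
    ∃ U : Fin (d + 1) → Set G,
      (∀ i, IsOpen (U i) ∧ U i ⊆ 𝒢.units) ∧
      (𝒢.src '' V ∪ 𝒢.rng '' V ⊆ ⋃ i, U i) ∧
      ∀ i, IsCompact (closure (𝒢.gen {g ∈ V | 𝒢.src g ∈ U i ∧ 𝒢.rng g ∈ U i}))

/-- Dynamic asymptotic dimension as an extended natural number. -/
noncomputable def dad : ℕ∞ :=
  sInf {m : ℕ∞ | ∃ d : ℕ, m = d ∧ 𝒢.DadLE d}

theorem subset_gen (X : Set G) : X ⊆ 𝒢.gen X :=
  fun _ hg => Set.mem_sInter.2 fun _ hS => hS.1 hg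

theorem gen_isSubgroupoid (X : Set G) : 𝒢.IsSubgroupoid (𝒢.gen X) := by
  constructor
  · intro g hg
    exact Set.mem_sInter.2 fun S hS => hS.2.1 g (Set.mem_sInter.1 hg S hS)
  · intro g hg h hh hgh
    exact Set.mem_sInter.2 fun S hS =>
      hS.2.2 g (Set.mem_sInter.1 hg S hS) h (Set.mem_sInter.1 hh S hS) hgh

theorem gen_subset {X S : Set G} (hX : X ⊆ S) (hS : 𝒢.IsSubgroupoid S) :
    𝒢.gen X ⊆ S := Set.sInter_subset_of_mem ⟨hX, hS⟩

end TopGroupoid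

/-- if a locally compact Hausdorff étale groupoid `G` has dynamic
asymptotic dimension at most `d` and `H ⊆ G` is a closed subgroupoid, then `H` has
dynamic asymptotic dimension at most `d`. -/
theorem stmt_15 {G : Type*} [TopologicalSpace G] [T2Space G] [LocallyCompactSpace G]
    (𝒢 : TopGroupoid G) (het : 𝒢.Etale) {d : ℕ} (hdad : 𝒢.DadLE d)
    (H : Set G) (hHclosed : IsClosed H) (hHsub : 𝒢.IsSubgroupoid H)
    (ℋ : TopGroupoid ↥H)
    (hsrc : ∀ g : H, (ℋ.src g : G) = 𝒢.src ↑g)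
    (hrng : ∀ g : H, (ℋ.rng g : G) = 𝒢.rng ↑g)
    (hinv : ∀ g : H, (ℋ.inv g : G) = 𝒢.inv ↑g)
    (hmul : ∀ (g h : H) (hgh : ℋ.src g = ℋ.rng h) (hgh' : 𝒢.src ↑g = 𝒢.rng ↑h),
      ((ℋ.mul g h hgh : H) : G) = 𝒢.mul (↑g) (↑h) hgh') :
    ℋ.DadLE d := by
  intro V hVopen hVcomp
  obtain ⟨W, hWopen, hWV⟩ := isOpen_induced_iff.mp hVopen
  -- a precompact open neighborhood of the image of `closure V`
  obtain ⟨K', hK'comp, hKK'⟩ :=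
    exists_compact_superset (hVcomp.image continuous_subtype_val)
  set V'' : Set G := W ∩ interior K' with hV''def
  have hclW' : closure (interior K') ⊆ K' :=
    closure_minimal interior_subset hK'comp.isClosed
  have hV''open : IsOpen V'' := hWopen.inter isOpen_interior
  have hV''comp : IsCompact (closure V'') :=
    hK'comp.of_isClosed_subset isClosed_closure
      ((closure_mono Set.inter_subset_right).trans hclW')
  obtain ⟨U, hUopen, hUcover, hUcomp⟩ := hdad V'' hV''open hV''comp
  have hmemV'' : ∀ g : ↥H, g ∈ V → (g : G) ∈ V'' := by
    intro g hg
    refine ⟨?_, hKK' (Set.mem_image_of_mem _ (subset_closure hg))⟩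
    have : g ∈ Subtype.val ⁻¹' W := hWV ▸ hg
    exact this
  refine ⟨fun i => Subtype.val ⁻¹' U i, ?_, ?_, ?_⟩
  · intro i
    refine ⟨(hUopen i).1.preimage continuous_subtype_val, ?_⟩
    intro x hx
    have hux : (x : G) ∈ 𝒢.units := (hUopen i).2 hx
    have : (ℋ.src x : G) = (x : G) := by rw [hsrc]; exact hux
    exact Subtype.ext this
  · intro x hx
    have hx' : (x : G) ∈ 𝒢.src '' V'' ∪ 𝒢.rng '' V'' := by
      rcases hx with ⟨g, hg, rfl⟩ | ⟨g, hg, rfl⟩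
      · exact Or.inl ⟨g, hmemV'' g hg, (hsrc g).symm⟩
      · exact Or.inr ⟨g, hmemV'' g hg, (hrng g).symm⟩
    obtain ⟨_, ⟨i, rfl⟩, hi⟩ := hUcover hx'
    exact Set.mem_iUnion.2 ⟨i, hi⟩
  · intro i
    set T : Set G := {g ∈ V'' | 𝒢.src g ∈ U i ∧ 𝒢.rng g ∈ U i} with hTdef
    have hgsub : ℋ.gen {g ∈ V | ℋ.src g ∈ Subtype.val ⁻¹' U i ∧
        ℋ.rng g ∈ Subtype.val ⁻¹' U i} ⊆ Subtype.val ⁻¹' (𝒢.gen T) := by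
      refine ℋ.gen_subset ?_ ?_
      · rintro g ⟨hgV, hgs, hgr⟩
        refine 𝒢.subset_gen T ⟨hmemV'' g hgV, ?_, ?_⟩
        · rw [← hsrc g]; exact hgs
        · rw [← hrng g]; exact hgr
      · constructor
        · intro g hg
          show (ℋ.inv g : G) ∈ 𝒢.gen T
          rw [hinv g]
          exact (𝒢.gen_isSubgroupoid T).1 _ hg
        · intro g hg h hh hgh
          have hgh' : 𝒢.src ↑g = 𝒢.rng ↑h := by
            rw [← hsrc g, ← hrng h, hgh]
          show (ℋ.mul g h hgh : G) ∈ 𝒢.gen T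
          rw [hmul g h hgh hgh']
          exact (𝒢.gen_isSubgroupoid T).2 _ hg _ hh hgh'
    have hpre : IsCompact (Subtype.val ⁻¹' closure (𝒢.gen T) : Set ↥H) :=
      hHclosed.isClosedEmbedding_subtypeVal.isCompact_preimage (hUcomp i)
    refine hpre.of_isClosed_subset isClosed_closure ?_
    exact closure_minimal
      (hgsub.trans (Set.preimage_mono subset_closure))
      (isClosed_closure.preimage continuous_subtype_val)
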